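/- The quotient ring ℂ[x,y,z,w]/⟨x*y*z - w^2⟩ is an integral domain but is not a unique factorization domain. -/

import Mathlib

/-!
The map `x, y, z, w ↦ a², b², c², abc` identifies the ring with a subring of `K[a,b,c]`: modulo
`w² = xyz` every polynomial is `r(x,y,z) + s(x,y,z) w`, whose image is an even part plus an odd
part under `a ↦ -a`, so it vanishes only if `r = s = 0`. In `K[a,b,c]` the only factorisations
of `a²` are through `a`, which is not in the image since the image is fixed by
`(a, b) ↦ (-a, -b)`; hence `x` is irreducible. But `x ∣ w²` while `a² ∤ abc`, so `x` is not prime.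
-/

open MvPolynomial

noncomputable section

namespace PSL2CharacterVariety

variable {K : Type*} [Field K]

abbrev relation : MvPolynomial (Fin 4) K := X 0 * X 1 * X 2 - X 3 ^ 2

variable (K) in
abbrev CoordRing : Type _ :=
  MvPolynomial (Fin 4) K ⧸ Ideal.span {(relation : MvPolynomial (Fin 4) K)}

def param : MvPolynomial (Fin 4) K →ₐ[K] MvPolynomial (Fin 3) K :=
  aeval ![X 0 ^ 2, X 1 ^ 2, X 2 ^ 2, X 0 * X 1 * X 2]

lemma param_relation : param (relation : MvPolynomial (Fin 4) K) = 0 := by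
  simp only [relation, param, map_sub, map_mul, map_pow, aeval_X, Matrix.cons_val]
  ring

@[simp]
lemma param_X_three : param (X 3 : MvPolynomial (Fin 4) K) = X 0 * X 1 * X 2 := by
  simp [param]

lemma param_rename_castSucc (r : MvPolynomial (Fin 3) K) :
    param (rename Fin.castSucc r) = expand 2 r := by
  rw [param, aeval_rename]
  exact congrArg (aeval · r) (funext fun i => by fin_cases i <;> rfl)

lemma exists_dvd_sub_add_mul_X_three (g : MvPolynomial (Fin 4) K) :
    ∃ r s : MvPolynomial (Fin 3) K,
      relation ∣ g - (rename Fin.castSucc r + rename Fin.castSucc s * X 3) := by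
  induction g using MvPolynomial.induction_on with
  | C a => exact ⟨C a, 0, by simp⟩
  | add p q hp hq =>
    obtain ⟨r, s, hrs⟩ := hp
    obtain ⟨r', s', hrs'⟩ := hq
    refine ⟨r + r', s + s', ?_⟩
    convert dvd_add hrs hrs' using 1
    simp only [map_add]
    ring
  | mul_X p i hp =>
    obtain ⟨r, s, hrs⟩ := hp
    rcases Fin.eq_castSucc_or_eq_last i with ⟨j, rfl⟩ | rfl
    · refine ⟨r * X j, s * X j, ?_⟩
      convert hrs.mul_right (X j.castSucc) using 1
      simp only [map_mul, rename_X]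
      ring
    · -- `w² ≡ xyz` lowers the degree in `w`
      refine ⟨s * (X 0 * X 1 * X 2), r, ?_⟩
      convert dvd_sub (hrs.mul_right (X 3)) (dvd_mul_right relation (rename Fin.castSucc s))
        using 1
      simp only [relation, map_mul, rename_X, Fin.castSucc_zero, Fin.castSucc_one,
        Fin.reduceCastSucc, Fin.reduceLast]
      ring

def signChange (ε : Fin 3 → K) : MvPolynomial (Fin 3) K →ₐ[K] MvPolynomial (Fin 3) K :=
  aeval fun i => C (ε i) * X i

lemma signChange_expand_two {ε : Fin 3 → K} (hε : ∀ i, ε i ^ 2 = 1) (r : MvPolynomial (Fin 3) K) :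
    signChange ε (expand 2 r) = expand 2 r := by
  rw [← AlgHom.comp_apply]
  congr 1
  ext i : 1
  simp [signChange, mul_pow, ← C_pow, hε]

lemma signChange_X_mul_X_mul_X (ε : Fin 3 → K) :
    signChange ε (X 0 * X 1 * X 2) = C (ε 0 * ε 1 * ε 2) * (X 0 * X 1 * X 2) := by
  simp only [signChange, map_mul, aeval_X]
  ring

lemma signChange_param {ε : Fin 3 → K} (hε : ∀ i, ε i ^ 2 = 1) (hε₃ : ε 0 * ε 1 * ε 2 = 1)
    (g : MvPolynomial (Fin 4) K) : signChange ε (param g) = param g := by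
  rw [← AlgHom.comp_apply]
  congr 1
  ext i : 1
  fin_cases i
  iterate 3 simp [param, signChange, mul_pow, ← C_pow, hε]
  simp only [param, AlgHom.comp_apply, aeval_X]
  simp [signChange_X_mul_X_mul_X, hε₃]

variable (K) in
def paramQuot : CoordRing K →ₐ[K] MvPolynomial (Fin 3) K :=
  Ideal.Quotient.liftₐ _ param fun _ hg => by
    obtain ⟨q, rfl⟩ := Ideal.mem_span_singleton.mp hg
    rw [map_mul, param_relation, zero_mul]

lemma paramQuot_mk (g : MvPolynomial (Fin 4) K) :
    paramQuot K (Ideal.Quotient.mk _ g) = param g :=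
  Ideal.Quotient.lift_mk _ _ _

lemma signChange_paramQuot (q : CoordRing K) :
    signChange ![-1, -1, 1] (paramQuot K q) = paramQuot K q := by
  obtain ⟨g, rfl⟩ := Ideal.Quotient.mk_surjective q
  rw [paramQuot_mk]
  exact signChange_param (ε := ![-1, -1, 1]) (fun i => by fin_cases i <;> simp) (by simp) g

lemma not_mk_X_zero_dvd_mk_X_three :
    ¬ (Ideal.Quotient.mk (Ideal.span {relation}) (X 0) : CoordRing K) ∣
      Ideal.Quotient.mk _ (X 3) := by
  intro h
  have h' := map_dvd (paramQuot K) h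
  simp only [paramQuot_mk, param_X_three] at h'
  simp only [param, sq, mul_assoc, aeval_X, Matrix.cons_val_zero,
    mul_dvd_mul_iff_left (X_ne_zero _)] at h'
  rcases X_prime.dvd_or_dvd h' with h'' | h'' <;> simp [X_dvd_X] at h''

lemma not_prime_mk_X_zero :
    ¬ Prime (Ideal.Quotient.mk (Ideal.span {relation}) (X 0) : CoordRing K) := by
  intro h
  have hdvd : (Ideal.Quotient.mk (Ideal.span {relation}) (X 0) : CoordRing K) ∣
      Ideal.Quotient.mk _ (X 3) * Ideal.Quotient.mk _ (X 3) :=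
    ⟨Ideal.Quotient.mk _ (X 1 * X 2), by
      rw [← map_mul, ← map_mul, Ideal.Quotient.eq, Ideal.mem_span_singleton]
      exact ⟨-1, by ring⟩⟩
  exact not_mk_X_zero_dvd_mk_X_three ((h.dvd_or_dvd hdvd).elim id id)

variable [NeZero (2 : K)]

lemma eq_zero_of_expand_two_add_mul_eq_zero {r s : MvPolynomial (Fin 3) K}
    (h : expand 2 r + expand 2 s * (X 0 * X 1 * X 2) = 0) : r = 0 ∧ s = 0 := by
  have hneg : expand 2 r - expand 2 s * (X 0 * X 1 * X 2) = 0 := by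
    have := congrArg (signChange ![-1, 1, 1]) h
    rw [map_add, map_mul, signChange_expand_two, signChange_expand_two,
      signChange_X_mul_X_mul_X] at this
    · simpa [sub_eq_add_neg] using this
    all_goals intro i; fin_cases i <;> simp
  have hr : expand 2 r = 0 := by
    have h2 : (2 : K) • expand 2 r = 0 := by
      rw [two_smul]
      linear_combination h + hneg
    exact (smul_eq_zero.mp h2).resolve_left two_ne_zero
  have hs : expand 2 s = 0 := by
    rw [hr, zero_add] at h
    exact (mul_eq_zero.mp h).resolve_right (by simp [X_ne_zero])
  exact ⟨expand_injective two_pos (hr.trans (map_zero _).symm),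
    expand_injective two_pos (hs.trans (map_zero _).symm)⟩

lemma relation_dvd_of_param_eq_zero {g : MvPolynomial (Fin 4) K} (hg : param g = 0) :
    relation ∣ g := by
  obtain ⟨r, s, q, hq⟩ := exists_dvd_sub_add_mul_X_three g
  have hsplit : expand 2 r + expand 2 s * (X 0 * X 1 * X 2) = 0 := by
    have := congrArg param hq
    rwa [map_sub, map_add, map_mul, map_mul, hg, param_relation, zero_mul, param_rename_castSucc,
      param_rename_castSucc, param_X_three, zero_sub, neg_eq_zero] at this
  obtain ⟨rfl, rfl⟩ := eq_zero_of_expand_two_add_mul_eq_zero hsplit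
  exact ⟨q, by simpa using hq⟩

lemma paramQuot_injective : Function.Injective (paramQuot K) :=
  RingHom.lift_injective_of_ker_le_ideal _ _ fun _ hg =>
    Ideal.mem_span_singleton.mpr (relation_dvd_of_param_eq_zero hg)

instance : IsDomain (CoordRing K) :=
  paramQuot_injective.isDomain (paramQuot K).toRingHom

lemma isUnit_of_isUnit_paramQuot {q : CoordRing K} (h : IsUnit (paramQuot K q)) : IsUnit q := by
  obtain ⟨c, hc, hq⟩ := isUnit_iff_eq_C_of_isReduced.mp h
  have : q = algebraMap K (CoordRing K) c :=
    paramQuot_injective (by rw [hq, AlgHom.commutes, algebraMap_eq])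
  exact this ▸ hc.map _

lemma not_associated_paramQuot_X_zero (q : CoordRing K) : ¬ Associated (paramQuot K q) (X 0) := by
  rintro ⟨u, hu⟩
  obtain ⟨c, -, hc⟩ := isUnit_iff_eq_C_of_isReduced.mp u.isUnit
  have hneg := congrArg (signChange ![-1, -1, 1]) hu
  rw [map_mul, signChange_paramQuot, hc, signChange, aeval_C, aeval_X] at hneg
  simp only [algebraMap_eq, Matrix.cons_val_zero, map_neg, map_one, neg_one_mul] at hneg
  rw [hc] at hu
  have h2 : (2 : K) • (X 0 : MvPolynomial (Fin 3) K) = 0 := by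
    rw [two_smul]
    linear_combination hneg - hu
  exact X_ne_zero 0 ((smul_eq_zero.mp h2).resolve_left two_ne_zero)

lemma irreducible_mk_X_zero :
    Irreducible (Ideal.Quotient.mk (Ideal.span {relation}) (X 0) : CoordRing K) := by
  have hx : paramQuot K (Ideal.Quotient.mk _ (X 0)) = X 0 ^ 2 := by
    simp [paramQuot_mk, param]
  refine ⟨fun h => ?_, fun a b hab => ?_⟩
  · have := h.map (paramQuot K)
    rw [hx, isUnit_pow_iff two_ne_zero] at this
    exact X_prime.not_isUnit this
  · have hab' : paramQuot K a * paramQuot K b = X 0 ^ 2 := by rw [← map_mul, ← hab, hx]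
    obtain ⟨i, hi, ha⟩ := (dvd_prime_pow X_prime 2).mp (Dvd.intro _ hab')
    interval_cases i
    · exact .inl (isUnit_of_isUnit_paramQuot (associated_one_iff_isUnit.mp ha))
    · exact absurd (pow_one (X 0 : MvPolynomial (Fin 3) K) ▸ ha) (not_associated_paramQuot_X_zero a)
    · obtain ⟨u, hu⟩ := ha
      have ha0 : paramQuot K a ≠ 0 := left_ne_zero_of_mul (hab'.symm ▸ pow_ne_zero 2 (X_ne_zero 0))
      rw [← hab'] at hu
      exact .inr (isUnit_of_isUnit_paramQuot (mul_left_cancel₀ ha0 hu ▸ u.isUnit))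

end PSL2CharacterVariety

end

/-- The quotient ring `ℂ[x,y,z,w]/⟨x*y*z - w^2⟩` is an integral domain but is not
a unique factorization domain. -/
theorem stmt0 :
    IsDomain (MvPolynomial (Fin 4) ℂ ⧸
      Ideal.span {(X 0 * X 1 * X 2 - X 3 ^ 2 : MvPolynomial (Fin 4) ℂ)}) ∧
    ∀ [IsDomain (MvPolynomial (Fin 4) ℂ ⧸
      Ideal.span {(X 0 * X 1 * X 2 - X 3 ^ 2 : MvPolynomial (Fin 4) ℂ)})],
      ¬ UniqueFactorizationMonoid (MvPolynomial (Fin 4) ℂ ⧸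
        Ideal.span {(X 0 * X 1 * X 2 - X 3 ^ 2 : MvPolynomial (Fin 4) ℂ)}) := by
  refine ⟨inferInstanceAs (IsDomain (PSL2CharacterVariety.CoordRing ℂ)), fun _ => ?_⟩
  exact PSL2CharacterVariety.not_prime_mk_X_zero (K := ℂ)
    (UniqueFactorizationMonoid.irreducible_iff_prime.mp PSL2CharacterVariety.irreducible_mk_X_zero)
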